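/- Under the offset-2 sensor attack lasting n ≤ 8 steps, the attack is harmless: for every admissible trajectory with x 0 = 0 and per-step increase in [0.6, 1.4], the temperature during the first 8 steps satisfies x k ≤ 1.4·k ≤ 11.2, and in particular the spoofed sensed value (true value minus 2, plus sensor error at most 0.1) during steps 1..8 never exceeds 11.2 - 2 + 0.1 = 9.3 < 10, so cooling is never wrongly suppressed while the true temperature could exceed 9.9 only from step 8 onward. -/
import Mathlib


/-- The offset-2 sensor attack lasting at most 8 steps is harmless: temperatures stay
at most 1.4·k ≤ 11.2 in the first 8 steps, the spoofed sensed value never exceeds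
9.3 < 10, and the true temperature stays at most 9.9 through step 7. -/
theorem stmt_13 (x : ℕ → ℝ) (hx0 : x 0 = 0)
    (hstep : ∀ k, x (k + 1) - x k ∈ Set.Icc (0.6 : ℝ) 1.4) :
    (∀ k ≤ 8, x k ≤ 1.4 * k ∧ x k ≤ 11.2) ∧
    (∀ k, 1 ≤ k → k ≤ 8 → ∀ y : ℝ, |y - x k| ≤ 0.1 → y - 2 ≤ 9.3) ∧
    (9.3 : ℝ) < 10 ∧
    (∀ k ≤ 7, x k ≤ 9.9) := by
  have hub : ∀ k, x k ≤ 1.4 * k := by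
    intro k
    induction k with
    | zero => simp [hx0]
    | succ n ih =>
      have := (hstep n).2
      push_cast
      nlinarith
  refine ⟨fun k hk => ⟨hub k, ?_⟩, fun k hk1 hk8 y hy => ?_, by norm_num,
    fun k hk => ?_⟩
  · have := hub k
    have : (k : ℝ) ≤ 8 := by exact_mod_cast hk
    nlinarith [hub k]
  · have := hub k
    have hk : (k : ℝ) ≤ 8 := by exact_mod_cast hk8
    have := abs_le.mp hy
    nlinarith
  · have := hub k
    have hk : (k : ℝ) ≤ 7 := by exact_mod_cast hk
    nlinarith
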